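/- Let q ≥ 1, 0 < β ≤ 2/3, n ≥ 2, and 1/2 < r ≤ (1/2)[n]_q^{1-β}. Then for all complex z with |z| ≤ r: |R_{n,q}(e_2; z) - z^2| ≤ (4q^2 r)^2·2/[n]_q^{β} + 2r·(2r)^2/[n]_q^{1-β}. (This is the m = 2 case of Theorem 2 of the paper.) -/

import Mathlib

/-- The real `q`-integer `[k]_q = 1 + q + ⋯ + q^{k-1}`. -/
noncomputable def qInt (q : ℝ) (k : ℕ) : ℝ := ∑ i ∈ Finset.range k, q ^ i

/-- The complex `q`-integer. -/
noncomputable def qIntC (q : ℝ) (k : ℕ) : ℂ := ∑ i ∈ Finset.range k, (q : ℂ) ^ i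

/-- The `q`-factorial `[n]_q!`. -/
noncomputable def qFactC (q : ℝ) (n : ℕ) : ℂ := ∏ i ∈ Finset.range n, qIntC q (i + 1)

/-- The `q`-binomial coefficient `[n choose k]_q`. -/
noncomputable def qBinomC (q : ℝ) (n k : ℕ) : ℂ :=
  qFactC q n / (qFactC q k * qFactC q (n - k))

/-- `a_n = [n]_q^{β-1}`. -/
noncomputable def balazsA (q β : ℝ) (n : ℕ) : ℝ := (qInt q n) ^ (β - 1)

/-- `b_n = [n]_q^{β}`. -/
noncomputable def balazsB (q β : ℝ) (n : ℕ) : ℝ := (qInt q n) ^ β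

/-- The complex `q`-Bernstein polynomial `B_{n,q}(g;w)`. -/
noncomputable def Bq (q : ℝ) (n : ℕ) (g : ℂ → ℂ) (w : ℂ) : ℂ :=
  ∑ k ∈ Finset.range (n + 1),
    g (qIntC q k / qIntC q n) * qBinomC q n k * w ^ k *
      ∏ s ∈ Finset.range (n - k), (1 - (q : ℂ) ^ s * w)

/-- The complex `q`-Balázs–Szabados operator `R_{n,q}(f;z)`. -/
noncomputable def Rq (q β : ℝ) (n : ℕ) (f : ℂ → ℂ) (z : ℂ) : ℂ :=
  ((1 + (balazsA q β n : ℂ) * z)⁻¹) ^ n *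
    ∑ k ∈ Finset.range (n + 1),
      f (qIntC q k / (balazsB q β n : ℂ)) * qBinomC q n k *
        ((balazsA q β n : ℂ) * z) ^ k *
        ∏ s ∈ Finset.range (n - k),
          (1 + (1 - (q : ℂ)) * qIntC q s * ((balazsA q β n : ℂ) * z))

/-!
Put `t = a_n z`. Then `R_{n,q}(f; z) = (1 + t)⁻ⁿ ∑ₖ f([k]_q / b_n) p_{n,k}(t)` for the basis
`p_{n,k}(t) = [n choose k]_q tᵏ ∏_{s < n-k} (1 + (1 - qˢ) t)`, a `q`-deformation of the
binomial expansion: `∑ₖ p_{n,k}(t) = (1 + t)ⁿ` by the `q`-Pascal rule. The absorption identity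
`[k+1]_q [n+1 choose k+1]_q = [n+1]_q [n choose k]_q` lowers the moments
`∑ₖ [k]_qʲ p_{n,k}(t)`, and since `[n]_q a_n = b_n` this gives the closed form
`R_{n,q}(e_2; z) = (z² + z / b_n) / (1 + t)²`. On `|z| ≤ r` we have `|t| ≤ a_n r ≤ 1/2`, so
`|(1 + t)⁻² - 1| ≤ 6 |t|` and `|(1 + t)⁻¹| ≤ 2`.
-/

open Finset

section QInteger

variable {q : ℝ}

lemma qIntC_eq_ofReal (q : ℝ) (k : ℕ) : qIntC q k = qInt q k := by
  simp [qIntC, qInt]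

lemma qIntC_zero (q : ℝ) : qIntC q 0 = 0 := by
  simp [qIntC]

lemma qIntC_add (q : ℝ) (a b : ℕ) : qIntC q (a + b) = qIntC q a + q ^ a * qIntC q b := by
  simp only [qIntC, sum_range_add, pow_add, mul_sum]

lemma qIntC_succ (q : ℝ) (k : ℕ) : qIntC q (k + 1) = 1 + q * qIntC q k := by
  rw [add_comm k, qIntC_add]
  simp [qIntC]

lemma one_sub_mul_qIntC (q : ℝ) (k : ℕ) : (1 - q) * qIntC q k = 1 - (q : ℂ) ^ k := by
  rw [qIntC, ← neg_sub, neg_mul, mul_comm, geom_sum_mul, neg_sub]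

lemma qInt_nonneg (hq : 0 ≤ q) (k : ℕ) : 0 ≤ qInt q k :=
  sum_nonneg fun i _ => pow_nonneg hq i

lemma one_le_qInt_succ (hq : 0 ≤ q) (k : ℕ) : 1 ≤ qInt q (k + 1) := by
  rw [qInt, sum_range_succ', pow_zero, le_add_iff_nonneg_left]
  exact sum_nonneg fun i _ => pow_nonneg hq _

lemma qIntC_succ_ne_zero (hq : 0 ≤ q) (k : ℕ) : qIntC q (k + 1) ≠ 0 := by
  rw [qIntC_eq_ofReal, Complex.ofReal_ne_zero]
  exact (zero_lt_one.trans_le (one_le_qInt_succ hq k)).ne'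

end QInteger

section QBinomial

variable {q : ℝ}

lemma qFactC_succ (q : ℝ) (n : ℕ) : qFactC q (n + 1) = qFactC q n * qIntC q (n + 1) :=
  prod_range_succ _ _

lemma qFactC_zero (q : ℝ) : qFactC q 0 = 1 :=
  prod_range_zero _

lemma qFactC_ne_zero (hq : 0 ≤ q) (n : ℕ) : qFactC q n ≠ 0 :=
  prod_ne_zero_iff.2 fun i _ => qIntC_succ_ne_zero hq i

lemma qBinomC_zero_right (hq : 0 ≤ q) (n : ℕ) : qBinomC q n 0 = 1 := by
  rw [qBinomC, Nat.sub_zero, qFactC_zero, one_mul, div_self (qFactC_ne_zero hq n)]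

lemma qBinomC_self (hq : 0 ≤ q) (n : ℕ) : qBinomC q n n = 1 := by
  rw [qBinomC, Nat.sub_self, qFactC_zero, mul_one, div_self (qFactC_ne_zero hq n)]

lemma qBinomC_succ_succ (hq : 0 ≤ q) (k d : ℕ) :
    qBinomC q (k + d + 2) (k + 1) =
      q ^ (d + 1) * qBinomC q (k + d + 1) k + qBinomC q (k + d + 1) (k + 1) := by
  rw [qBinomC, qBinomC, qBinomC, show k + d + 2 - (k + 1) = d + 1 by omega,
    show k + d + 1 - k = d + 1 by omega, show k + d + 1 - (k + 1) = d by omega,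
    qFactC_succ q (k + d + 1), qFactC_succ q k, qFactC_succ q d,
    show k + d + 1 + 1 = (d + 1) + (k + 1) by omega, qIntC_add]
  field_simp [qFactC_ne_zero hq, qIntC_succ_ne_zero hq]
  ring

lemma qIntC_mul_qBinomC_succ (hq : 0 ≤ q) (k d : ℕ) :
    qIntC q (k + 1) * qBinomC q (k + d + 1) (k + 1) =
      qIntC q (k + d + 1) * qBinomC q (k + d) k := by
  rw [qBinomC, qBinomC, show k + d + 1 - (k + 1) = d by omega, show k + d - k = d by omega,
    qFactC_succ q (k + d), qFactC_succ q k]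
  field_simp [qFactC_ne_zero hq, qIntC_succ_ne_zero hq]

end QBinomial

section Basis

variable {q : ℝ}

noncomputable def qProd (q : ℝ) (t : ℂ) (j : ℕ) : ℂ :=
  ∏ s ∈ range j, (1 + (1 - (q : ℂ) ^ s) * t)

lemma qProd_zero (q : ℝ) (t : ℂ) : qProd q t 0 = 1 :=
  prod_range_zero _

lemma qProd_succ (q : ℝ) (t : ℂ) (j : ℕ) :
    qProd q t (j + 1) = qProd q t j * (1 + (1 - (q : ℂ) ^ j) * t) :=
  prod_range_succ _ _

noncomputable def qBasis (q : ℝ) (n k : ℕ) (t : ℂ) : ℂ :=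
  qBinomC q n k * t ^ k * qProd q t (n - k)

lemma sum_qBasis (hq : 0 ≤ q) (t : ℂ) (n : ℕ) :
    ∑ k ∈ range (n + 1), qBasis q n k t = (1 + t) ^ n := by
  induction n with
  | zero => simp [qBasis, qBinomC_self hq, qProd_zero]
  | succ m ih =>
    set H : ℕ → ℂ := fun k => q ^ (m - k) * qBinomC q m k * t ^ (k + 1) * qProd q t (m - k)
    have h_bot : qBasis q (m + 1) 0 t = (1 + t) * qBasis q m 0 t - H 0 := by
      simp only [qBasis, H, qBinomC_zero_right hq, Nat.sub_zero, qProd_succ]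
      ring
    have h_top : qBasis q (m + 1) (m + 1) t = H m := by
      simp [qBasis, H, qProd_zero, qBinomC_self hq]
    have h_mid : ∀ k ∈ range m,
        qBasis q (m + 1) (k + 1) t = (1 + t) * qBasis q m (k + 1) t + (H k - H (k + 1)) := by
      intro k hk
      obtain ⟨d, rfl⟩ : ∃ d, m = k + d + 1 := ⟨m - k - 1, by grind⟩
      simp only [qBasis, H, show k + d + 1 + 1 = k + d + 2 by omega, qBinomC_succ_succ hq,
        show k + d + 2 - (k + 1) = d + 1 by omega, show k + d + 1 - (k + 1) = d by omega,
        show k + d + 1 - k = d + 1 by omega, qProd_succ]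
      ring
    calc ∑ k ∈ range (m + 1 + 1), qBasis q (m + 1) k t
        = ∑ k ∈ range m, qBasis q (m + 1) (k + 1) t + qBasis q (m + 1) (m + 1) t
            + qBasis q (m + 1) 0 t := by
          rw [sum_range_succ', sum_range_succ]
      _ = (1 + t) * (∑ k ∈ range m, qBasis q m (k + 1) t + qBasis q m 0 t) := by
          rw [sum_congr rfl h_mid, sum_add_distrib, sum_range_sub', h_bot, h_top, mul_add, mul_sum]
          ring
      _ = (1 + t) ^ (m + 1) := by
          rw [← sum_range_succ' (fun k => qBasis q m k t), ih, pow_succ']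

end Basis

section Moments

variable {q : ℝ}

lemma sum_qIntC_mul_qBasis_succ (hq : 0 ≤ q) (f : ℕ → ℂ) (t : ℂ) (n : ℕ) :
    ∑ k ∈ range (n + 2), qIntC q k * f k * qBasis q (n + 1) k t =
      qIntC q (n + 1) * t * ∑ k ∈ range (n + 1), f (k + 1) * qBasis q n k t := by
  rw [sum_range_succ', qIntC_zero, zero_mul, zero_mul, add_zero, mul_sum]
  refine sum_congr rfl fun k hk => ?_
  obtain ⟨d, rfl⟩ : ∃ d, n = k + d := ⟨n - k, by grind⟩
  simp only [qBasis, show k + d + 1 - (k + 1) = d by omega, show k + d - k = d by omega]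
  linear_combination (f (k + 1) * t ^ (k + 1) * qProd q t d) * qIntC_mul_qBinomC_succ hq k d

lemma one_add_mul_sum_qIntC_mul_qBasis (hq : 0 ≤ q) (t : ℂ) (n : ℕ) :
    (1 + t) * ∑ k ∈ range (n + 1), qIntC q k * qBasis q n k t =
      qIntC q n * t * (1 + t) ^ n := by
  cases n with
  | zero => simp [qIntC_zero]
  | succ m =>
    have h := sum_qIntC_mul_qBasis_succ hq (fun _ => 1) t m
    simp only [mul_one, one_mul] at h
    rw [h, sum_qBasis hq, pow_succ]
    ring

lemma one_add_sq_mul_sum_qIntC_sq_mul_qBasis (hq : 0 ≤ q) (t : ℂ) (n : ℕ) :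
    (1 + t) ^ 2 * ∑ k ∈ range (n + 1), qIntC q k ^ 2 * qBasis q n k t =
      qIntC q n * t * (1 + qIntC q n * t) * (1 + t) ^ n := by
  cases n with
  | zero => simp [qIntC_zero]
  | succ m =>
    have h_shift := sum_qIntC_mul_qBasis_succ hq (qIntC q) t m
    have h_split : ∑ k ∈ range (m + 1), qIntC q (k + 1) * qBasis q m k t =
        ∑ k ∈ range (m + 1), qBasis q m k t +
          q * ∑ k ∈ range (m + 1), qIntC q k * qBasis q m k t := by
      simp only [qIntC_succ, add_mul, one_mul, sum_add_distrib, mul_sum, mul_assoc]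
    simp only [← sq] at h_shift
    rw [h_shift, h_split, sum_qBasis hq]
    linear_combination
      (q * qIntC q (m + 1) * t * (1 + t)) * one_add_mul_sum_qIntC_mul_qBasis hq t m -
        (qIntC q (m + 1) * t ^ 2 * (1 + t) ^ (m + 1)) * qIntC_succ q m

end Moments

section Estimates

variable {t : ℂ}

lemma half_le_norm_one_add (ht : ‖t‖ ≤ 1 / 2) : 1 / 2 ≤ ‖1 + t‖ := by
  have := norm_sub_le_norm_add (1 : ℂ) t
  rw [norm_one] at this
  linarith

lemma norm_inv_one_add_le_two (ht : ‖t‖ ≤ 1 / 2) : ‖(1 + t)⁻¹‖ ≤ 2 := by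
  rw [norm_inv]
  exact inv_le_of_inv_le₀ (by norm_num) (by linarith [half_le_norm_one_add ht])

lemma norm_inv_one_add_sq_sub_one_le (ht : ‖t‖ ≤ 1 / 2) :
    ‖((1 + t) ^ 2)⁻¹ - 1‖ ≤ 6 * ‖t‖ := by
  have h1t : 1 + t ≠ 0 := norm_pos_iff.1 (by linarith [half_le_norm_one_add ht])
  -- with `u = t / (1 + t)` one has `(1 + t)⁻¹ = 1 - u`
  have h_eq : ((1 + t) ^ 2)⁻¹ - 1 = t * (1 + t)⁻¹ * (t * (1 + t)⁻¹ - 2) := by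
    field_simp
    ring
  set u := t * (1 + t)⁻¹
  have hu : ‖u‖ ≤ 2 * ‖t‖ := by
    rw [norm_mul, mul_comm]
    exact mul_le_mul_of_nonneg_right (norm_inv_one_add_le_two ht) (norm_nonneg t)
  have hu2 : ‖u - 2‖ ≤ 3 := by
    refine (norm_sub_le _ _).trans ?_
    rw [Complex.norm_two]
    linarith
  calc ‖((1 + t) ^ 2)⁻¹ - 1‖ = ‖u‖ * ‖u - 2‖ := by rw [h_eq, norm_mul]
    _ ≤ 2 * ‖t‖ * 3 := mul_le_mul hu hu2 (norm_nonneg _) (by positivity)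
    _ = 6 * ‖t‖ := by ring

lemma norm_div_one_add_sq_sub_sq_le {z c : ℂ} (ht : ‖t‖ ≤ 1 / 2) :
    ‖(z ^ 2 + z / c) / (1 + t) ^ 2 - z ^ 2‖ ≤
      ‖z‖ / ‖c‖ * 2 ^ 2 + ‖z‖ ^ 2 * (6 * ‖t‖) := by
  have h_split : (z ^ 2 + z / c) / (1 + t) ^ 2 - z ^ 2 =
      z / c * ((1 + t)⁻¹) ^ 2 + z ^ 2 * (((1 + t) ^ 2)⁻¹ - 1) := by
    rw [inv_pow]
    ring
  rw [h_split]
  refine (norm_add_le _ _).trans ?_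
  rw [norm_mul, norm_mul, norm_div, norm_pow, norm_pow]
  gcongr
  · exact norm_inv_one_add_le_two ht
  · exact norm_inv_one_add_sq_sub_one_le ht

end Estimates

section BalazsSzabados

variable {q : ℝ}

lemma Rq_eq_sum_qBasis (q β : ℝ) (n : ℕ) (f : ℂ → ℂ) (z : ℂ) :
    Rq q β n f z = ((1 + balazsA q β n * z)⁻¹) ^ n * ∑ k ∈ range (n + 1),
      f (qIntC q k / balazsB q β n) * qBasis q n k (balazsA q β n * z) := by
  simp only [Rq, qBasis, qProd, one_sub_mul_qIntC, mul_assoc]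

lemma Rq_sq_mul_one_add_sq (hq : 0 ≤ q) (β : ℝ) (n : ℕ) {z : ℂ}
    (hz : 1 + balazsA q β n * z ≠ 0) :
    Rq q β n (fun w => w ^ 2) z * (1 + balazsA q β n * z) ^ 2 =
      qIntC q n * (balazsA q β n * z) * (1 + qIntC q n * (balazsA q β n * z)) /
        (balazsB q β n : ℂ) ^ 2 := by
  set t : ℂ := balazsA q β n * z
  set S := ∑ k ∈ range (n + 1), qIntC q k ^ 2 * qBasis q n k t
  have h_moment : (1 + t) ^ 2 * S = qIntC q n * t * (1 + qIntC q n * t) * (1 + t) ^ n :=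
    one_add_sq_mul_sum_qIntC_sq_mul_qBasis hq t n
  have h_sum : ∑ k ∈ range (n + 1), (qIntC q k / balazsB q β n) ^ 2 * qBasis q n k t =
      S / (balazsB q β n : ℂ) ^ 2 := by
    rw [sum_div]
    exact sum_congr rfl fun k _ => by ring
  rw [Rq_eq_sum_qBasis, h_sum, inv_pow]
  calc _ = ((1 + t) ^ n)⁻¹ * ((1 + t) ^ 2 * S) / (balazsB q β n : ℂ) ^ 2 := by ring
    _ = _ := by
      rw [h_moment]
      field_simp

lemma qInt_mul_balazsA {n : ℕ} (hN : 0 < qInt q n) (β : ℝ) :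
    qInt q n * balazsA q β n = balazsB q β n := by
  rw [balazsA, balazsB, Real.rpow_sub_one hN.ne', mul_div_cancel₀ _ hN.ne']

lemma balazsA_mul_rpow {n : ℕ} (hN : 0 < qInt q n) (β : ℝ) :
    balazsA q β n * qInt q n ^ (1 - β) = 1 := by
  rw [balazsA, ← Real.rpow_add hN, show β - 1 + (1 - β) = 0 by ring, Real.rpow_zero]

lemma Rq_sq_eq (hq : 0 ≤ q) (β : ℝ) {n : ℕ} (hN : 0 < qInt q n) {z : ℂ}
    (hz : 1 + balazsA q β n * z ≠ 0) :
    Rq q β n (fun w => w ^ 2) z =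
      (z ^ 2 + z / balazsB q β n) / (1 + balazsA q β n * z) ^ 2 := by
  have hB : (balazsB q β n : ℂ) ≠ 0 := by
    exact_mod_cast (Real.rpow_pos_of_pos hN β).ne'
  have hAB : (qInt q n : ℂ) * balazsA q β n = balazsB q β n := by
    exact_mod_cast qInt_mul_balazsA hN β
  rw [eq_div_iff (pow_ne_zero 2 hz), Rq_sq_mul_one_add_sq hq β n hz, qIntC_eq_ofReal]
  field_simp
  linear_combination (z * (qInt q n * balazsA q β n + balazsB q β n) * z + z) * hAB

lemma norm_Rq_sq_sub_sq_le (hq : 0 ≤ q) (β : ℝ) {n : ℕ} (hN : 0 < qInt q n)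
    {z : ℂ} (ht : ‖(balazsA q β n : ℂ) * z‖ ≤ 1 / 2) :
    ‖Rq q β n (fun w => w ^ 2) z - z ^ 2‖ ≤
      ‖z‖ / qInt q n ^ β * 2 ^ 2 + ‖z‖ ^ 2 * (6 * ‖(balazsA q β n : ℂ) * z‖) := by
  have h1t : 1 + (balazsA q β n : ℂ) * z ≠ 0 :=
    norm_pos_iff.1 (by linarith [half_le_norm_one_add ht])
  have hB : ‖(balazsB q β n : ℂ)‖ = qInt q n ^ β := by
    rw [Complex.norm_real, balazsB, Real.norm_of_nonneg (Real.rpow_nonneg hN.le β)]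
  rw [Rq_sq_eq hq β hN h1t, ← hB]
  exact norm_div_one_add_sq_sub_sq_le ht

end BalazsSzabados

theorem balazs_e2_estimate_general (q β : ℝ) (hq : 1 ≤ q)
    (n : ℕ) (r : ℝ) (hr0 : 1 / 2 < r)
    (hr : r ≤ (1 / 2) * (qInt q n) ^ (1 - β)) (z : ℂ) (hz : ‖z‖ ≤ r) :
    ‖Rq q β n (fun w => w ^ 2) z - z ^ 2‖ ≤
      (4 * q ^ 2 * r) ^ 2 * 2 / (qInt q n) ^ β + 2 * r * (2 * r) ^ 2 / (qInt q n) ^ (1 - β) := by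
  have hr_pos : 0 < r := by linarith
  -- `0 ^ x ≤ 1 < 2 r` rules out `[n]_q = 0`
  have hN : 0 < qInt q n := (qInt_nonneg (by linarith) n).lt_of_ne fun h => by
    rw [← h] at hr
    linarith [Real.zero_rpow_le_one (1 - β)]
  set a := balazsA q β n
  have ha : a = 1 / qInt q n ^ (1 - β) := eq_one_div_of_mul_eq_one_left (balazsA_mul_rpow hN β)
  have ha0 : 0 < a := Real.rpow_pos_of_pos hN _
  have ht : ‖(a : ℂ) * z‖ ≤ a * r := by
    rw [norm_mul, Complex.norm_real, Real.norm_of_nonneg ha0.le]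
    gcongr
  have h_ar : a * r ≤ 1 / 2 := by
    rw [ha, one_div_mul_eq_div, div_le_iff₀ (by positivity)]
    linarith
  calc ‖Rq q β n (fun w => w ^ 2) z - z ^ 2‖
      ≤ ‖z‖ / qInt q n ^ β * 2 ^ 2 + ‖z‖ ^ 2 * (6 * ‖(a : ℂ) * z‖) :=
        norm_Rq_sq_sub_sq_le (by linarith) β hN (ht.trans h_ar)
    _ ≤ r / qInt q n ^ β * 2 ^ 2 + r ^ 2 * (6 * (a * r)) := by gcongr
    _ ≤ (4 * q ^ 2 * r) ^ 2 * 2 / qInt q n ^ β + 2 * r * (2 * r) ^ 2 * a := by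
        rw [div_mul_eq_mul_div]
        gcongr ?_ / _ + ?_
        · nlinarith [mul_le_mul_of_nonneg_right (one_le_pow₀ (n := 4) hq) (sq_nonneg r)]
        · nlinarith [pow_pos hr_pos 3]
    _ = _ := by rw [ha, mul_one_div]

theorem balazs_e2_estimate (q β : ℝ) (hq : 1 ≤ q) (hβ0 : 0 < β) (hβ : β ≤ 2 / 3)
    (n : ℕ) (hn : 2 ≤ n) (r : ℝ) (hr0 : 1 / 2 < r)
    (hr : r ≤ (1 / 2) * (qInt q n) ^ (1 - β)) (z : ℂ) (hz : ‖z‖ ≤ r) :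
    ‖Rq q β n (fun w => w ^ 2) z - z ^ 2‖ ≤
      (4 * q ^ 2 * r) ^ 2 * 2 / (qInt q n) ^ β + 2 * r * (2 * r) ^ 2 / (qInt q n) ^ (1 - β) :=
  balazs_e2_estimate_general q β hq n r hr0 hr z hz
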